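/- arXiv:2407.14113 — 2 statements merged into one kernel-verified Lean document; each statement's English description precedes it below -/
import Mathlib

section
/- For every integer n ≥ 10, the spider Sp(2^[n]) admits no local antimagic total labeling whose induced vertex weights take exactly 2 distinct values; that is, χ_lat(Sp(2^[n])) ≥ 3 for n ≥ 10. (The key inequality is: if such a 2-labeling existed, then (n+1)(n+2)/2 ≤ w(x) ≤ (6n+3), forcing n² − 9n − 4 ≤ 0 and hence n ≤ 9.) -/
/-! If the weights of a local antimagic total labeling of `Sp(2^[n])` take only two values, they
alternate along each leg, so every leaf has the weight `W` of the hub. The hub's weight is a sum of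
`n + 1` distinct positive labels, so `2W ≥ (n + 1)(n + 2)`; the `n` leaf weights together are a sum
of `2n` distinct labels from `{1, …, 4n + 1}`, so `2nW ≤ (4n + 1)(4n + 2) - (2n + 1)(2n + 2)`.
Hence `n ≤ 9`. For `χ_lat ≥ 3` some local antimagic total labeling must also exist, since otherwise
the infimum defining `χ_lat` is `0`. -/

open Finset

variable {V : Type*} [Fintype V] [DecidableEq V]

/-- The weight of a vertex `u` under the total labeling given by vertex labels `fv`
and edge labels `fe` : `w(u) = f(u) + \sum_{e incident to u} f(e)`. -/
def latWeight (G : SimpleGraph V) [DecidableRel G.Adj]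
    (fv : V → ℕ) (fe : Sym2 V → ℕ) (u : V) : ℕ :=
  fv u + ∑ v ∈ G.neighborFinset u, fe s(u, v)

/-- `fv, fe` together form a bijection from `V(G) ∪ E(G)` onto `{1, …, p + q}`,
where `p` is the order and `q` is the size of `G`. -/
def IsTotalLabeling (G : SimpleGraph V) [DecidableRel G.Adj]
    (fv : V → ℕ) (fe : Sym2 V → ℕ) : Prop :=
  Set.BijOn (Sum.elim fv (fun e : G.edgeSet => fe (e : Sym2 V))) Set.univ
    (Set.Icc 1 (Fintype.card V + G.edgeFinset.card))

/-- A local antimagic total labeling of `G` : a bijective total labeling such that any two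
adjacent vertices get distinct weights. -/
def IsLocalAntimagicTotal (G : SimpleGraph V) [DecidableRel G.Adj]
    (fv : V → ℕ) (fe : Sym2 V → ℕ) : Prop :=
  IsTotalLabeling G fv fe ∧
    ∀ ⦃u v : V⦄, G.Adj u v → latWeight G fv fe u ≠ latWeight G fv fe v

/-- The local antimagic total chromatic number `χ_lat(G)` : the minimum number of distinct
vertex weights taken over all local antimagic total labelings of `G`. -/
noncomputable def chiLat (G : SimpleGraph V) [DecidableRel G.Adj] : ℕ :=
  sInf {c | ∃ fv fe, IsLocalAntimagicTotal G fv fe ∧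
    (Finset.univ.image (latWeight G fv fe)).card = c}

instance {W : Type*} (r : W → W → Prop) [DecidableEq W] [DecidableRel r] :
    DecidableRel (SimpleGraph.fromRel r).Adj :=
  fun a b => decidable_of_iff _ (SimpleGraph.fromRel_adj r a b).symm

/-- Adjacency for the spider `Sp(2^[n])` : the center `none` is adjacent to each middle
vertex `some (i, false)`, and `some (i, false)` is adjacent to the leaf `some (i, true)`. -/
def spider2R (n : ℕ) : Option (Fin n × Bool) → Option (Fin n × Bool) → Bool
  | none, some (_, false) => true
  | some (i, false), some (j, true) => decide (i = j)
  | _, _ => false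

/-- The spider `Sp(2^[n])` with `n` legs of length `2`. -/
abbrev spider2 (n : ℕ) : SimpleGraph (Option (Fin n × Bool)) :=
  SimpleGraph.fromRel (fun a b => spider2R n a b = true)


theorem Finset.card_mul_card_add_one_le_two_mul_sum {s : Finset ℕ} (hs : 0 ∉ s) :
    #s * (#s + 1) ≤ 2 * ∑ t ∈ s, t := by
  induction s using Finset.induction_on_max with
  | empty => simp
  | insert a s hlt ih =>
    have ha : a ≠ 0 := fun h => hs (h ▸ mem_insert_self a s)
    have has : a ∉ s := fun h => (hlt a h).false
    have hcard : #s + 1 ≤ a := by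
      have hsub : s ⊆ Ico 1 a := fun t ht =>
        mem_Ico.2 ⟨Nat.one_le_iff_ne_zero.2 fun h => hs (h ▸ mem_insert_of_mem ht), hlt t ht⟩
      have := card_le_card hsub
      rw [Nat.card_Ico] at this
      omega
    rw [card_insert_of_notMem has, sum_insert has]
    nlinarith [ih fun h => hs (mem_insert_of_mem h)]

theorem Finset.two_mul_sum_Icc_one (N : ℕ) : 2 * ∑ t ∈ Icc 1 N, t = N * (N + 1) := by
  induction N with
  | zero => simp
  | succ N ih => rw [sum_Icc_succ_top (by omega), mul_add, ih]; ring

theorem Finset.two_mul_sum_add_le {s : Finset ℕ} {N : ℕ} (hs : s ⊆ Icc 1 N) :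
    2 * ∑ t ∈ s, t + (N - #s) * (N - #s + 1) ≤ N * (N + 1) := by
  have hlow := card_mul_card_add_one_le_two_mul_sum (s := Icc 1 N \ s) (by simp)
  rw [card_sdiff_of_subset hs, Nat.card_Icc, Nat.add_sub_cancel] at hlow
  have hsplit := sum_sdiff hs (f := fun t => t)
  have hgauss := two_mul_sum_Icc_one N
  omega

theorem Finset.apply_eq_of_card_image_le_two {α β : Type*} [Fintype α] [DecidableEq β]
    {f : α → β} (hf : #(univ.image f) ≤ 2) {x y z : α} (hxy : f x ≠ f y) (hyz : f y ≠ f z) :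
    f x = f z := by
  by_contra hxz
  have hsub : ({f x, f y, f z} : Finset β) ⊆ univ.image f := by simp [insert_subset_iff]
  have := card_le_card hsub
  rw [card_insert_of_notMem (by simp [hxy, hxz]), card_pair hyz] at this
  omega

section TotalLabeling

omit [DecidableEq V]

variable {G : SimpleGraph V} [DecidableRel G.Adj] {fv : V → ℕ} {fe : Sym2 V → ℕ}

abbrev totalLabel (G : SimpleGraph V) (fv : V → ℕ) (fe : Sym2 V → ℕ) : V ⊕ G.edgeSet → ℕ :=
  Sum.elim fv (fun e : G.edgeSet => fe (e : Sym2 V))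

theorem isTotalLabeling_of_surjOn
    (hmaps : ∀ x, totalLabel G fv fe x ∈ Set.Icc 1 (Fintype.card V + #G.edgeFinset))
    (hsurj : Set.SurjOn (totalLabel G fv fe) Set.univ
      (Set.Icc 1 (Fintype.card V + #G.edgeFinset))) :
    IsTotalLabeling G fv fe := by
  refine ⟨fun x _ => hmaps x, ?_, hsurj⟩
  have hcard :
      #(univ : Finset (V ⊕ G.edgeSet)) ≤ #(Icc 1 (Fintype.card V + #G.edgeFinset)) := by
    simp [SimpleGraph.edgeFinset_card]
  rw [← coe_univ]
  exact injOn_of_surjOn_of_card_le _ (fun x _ => by simpa using hmaps x)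
    (by rwa [coe_univ, coe_Icc]) hcard

theorem IsTotalLabeling.exists_finset_sum_eq {α : Type*} [Fintype α]
    (hf : IsTotalLabeling G fv fe) {ι : α → V ⊕ G.edgeSet} (hι : Function.Injective ι) :
    ∃ s ⊆ Icc 1 (Fintype.card V + #G.edgeFinset),
      #s = Fintype.card α ∧ ∑ t ∈ s, t = ∑ a, totalLabel G fv fe (ι a) := by
  have hinj : Function.Injective (totalLabel G fv fe ∘ ι) :=
    (Set.injOn_univ.1 hf.injOn).comp hι
  refine ⟨univ.image (totalLabel G fv fe ∘ ι), ?_,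
    by rw [card_image_of_injective _ hinj, card_univ], sum_image fun a _ b _ h => hinj h⟩
  intro t ht
  obtain ⟨a, -, rfl⟩ := mem_image.1 ht
  simpa using hf.mapsTo (Set.mem_univ (ι a))

theorem IsLocalAntimagicTotal.two_le_card_image_latWeight (hL : IsLocalAntimagicTotal G fv fe)
    {u v : V} (huv : G.Adj u v) : 2 ≤ #(univ.image (latWeight G fv fe)) :=
  one_lt_card.2 ⟨_, mem_image_of_mem _ (mem_univ u), _, mem_image_of_mem _ (mem_univ v), hL.2 huv⟩

theorem le_chiLat {k : ℕ} (hex : ∃ fv fe, IsLocalAntimagicTotal G fv fe)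
    (hk : ∀ fv fe, IsLocalAntimagicTotal G fv fe → k ≤ #(univ.image (latWeight G fv fe))) :
    k ≤ chiLat G :=
  le_csInf (let ⟨fv, fe, hL⟩ := hex; ⟨_, fv, fe, hL, rfl⟩)
    fun _ ⟨fv, fe, hL, hc⟩ => hc ▸ hk fv fe hL

end TotalLabeling

section Spider

variable {n : ℕ} {fv : Option (Fin n × Bool) → ℕ} {fe : Sym2 (Option (Fin n × Bool)) → ℕ}

theorem spider2_adj_hub_mid (i : Fin n) : (spider2 n).Adj none (some (i, false)) := by
  simp [spider2R]

theorem spider2_adj_mid_leaf (i : Fin n) :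
    (spider2 n).Adj (some (i, false)) (some (i, true)) := by
  simp [spider2R]

theorem spider2_neighborFinset_hub :
    (spider2 n).neighborFinset none = univ.image fun i => some (i, false) := by
  ext (_ | ⟨j, _ | _⟩) <;> simp [spider2R]

theorem spider2_neighborFinset_mid (i : Fin n) :
    (spider2 n).neighborFinset (some (i, false)) = {none, some (i, true)} := by
  ext (_ | ⟨j, _ | _⟩) <;> simp [spider2R, eq_comm]

theorem spider2_neighborFinset_leaf (i : Fin n) :
    (spider2 n).neighborFinset (some (i, true)) = {some (i, false)} := by
  ext (_ | ⟨j, _ | _⟩) <;> simp [spider2R, eq_comm]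

theorem spider2_edge_cases {e : Sym2 (Option (Fin n × Bool))} (he : e ∈ (spider2 n).edgeSet) :
    ∃ i, e = s(none, some (i, false)) ∨ e = s(some (i, false), some (i, true)) := by
  induction e using Sym2.ind with | _ a b =>
  rcases a with _ | ⟨i, _ | _⟩ <;> rcases b with _ | ⟨j, _ | _⟩ <;>
    simp [spider2R] at he ⊢ <;> grind

theorem card_add_card_edgeFinset_spider2 :
    Fintype.card (Option (Fin n × Bool)) + #(spider2 n).edgeFinset = 4 * n + 1 := by
  have hdeg := (spider2 n).sum_degrees_eq_twice_card_edges
  simp only [← SimpleGraph.card_neighborFinset_eq_degree, Fintype.sum_option,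
    Fintype.sum_prod_type, Fintype.sum_bool, spider2_neighborFinset_hub,
    spider2_neighborFinset_mid, spider2_neighborFinset_leaf] at hdeg
  rw [card_image_of_injective _ fun i j h => by simpa using h] at hdeg
  simp at hdeg ⊢
  omega

theorem latWeight_spider2_hub :
    latWeight (spider2 n) fv fe none = fv none + ∑ i, fe s(none, some (i, false)) := by
  rw [latWeight, spider2_neighborFinset_hub, sum_image fun i _ j _ h => by simpa using h]

theorem latWeight_spider2_mid (i : Fin n) :
    latWeight (spider2 n) fv fe (some (i, false)) =
      fv (some (i, false)) + fe s(none, some (i, false)) +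
        fe s(some (i, false), some (i, true)) := by
  rw [latWeight, spider2_neighborFinset_mid, sum_pair (by simp), Sym2.eq_swap, add_assoc]

theorem latWeight_spider2_leaf (i : Fin n) :
    latWeight (spider2 n) fv fe (some (i, true)) =
      fv (some (i, true)) + fe s(some (i, false), some (i, true)) := by
  rw [latWeight, spider2_neighborFinset_leaf, sum_singleton, Sym2.eq_swap]

variable (n) in
def spider2HubEdge (i : Fin n) : (spider2 n).edgeSet :=
  ⟨s(none, some (i, false)), spider2_adj_hub_mid i⟩

variable (n) in
def spider2LegEdge (i : Fin n) : (spider2 n).edgeSet :=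
  ⟨s(some (i, false), some (i, true)), spider2_adj_mid_leaf i⟩

theorem spider2HubEdge_injective : Function.Injective (spider2HubEdge n) := fun i j h => by
  simpa [spider2HubEdge, Subtype.ext_iff] using h

theorem spider2LegEdge_injective : Function.Injective (spider2LegEdge n) := fun i j h => by
  simpa [spider2LegEdge, Subtype.ext_iff] using h

theorem IsTotalLabeling.two_mul_latWeight_spider2_hub_ge
    (hf : IsTotalLabeling (spider2 n) fv fe) :
    (n + 1) * (n + 2) ≤ 2 * latWeight (spider2 n) fv fe none := by
  obtain ⟨s, hs, hcard, hsum⟩ := hf.exists_finset_sum_eq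
    (Sum.map_injective.2 ⟨fun _ _ _ => rfl, spider2HubEdge_injective⟩ :
      Function.Injective (Sum.map (fun _ : Unit => none) (spider2HubEdge n)))
  have hlow := card_mul_card_add_one_le_two_mul_sum (s := s) fun h => by simpa using hs h
  simp [Fintype.sum_sum_type, spider2HubEdge, ← latWeight_spider2_hub] at hcard hsum
  rw [hcard, hsum] at hlow
  linarith

theorem IsTotalLabeling.two_mul_sum_latWeight_spider2_leaf_add_le
    (hf : IsTotalLabeling (spider2 n) fv fe) :
    2 * ∑ i, latWeight (spider2 n) fv fe (some (i, true)) + (2 * n + 1) * (2 * n + 2) ≤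
      (4 * n + 1) * (4 * n + 2) := by
  obtain ⟨s, hs, hcard, hsum⟩ := hf.exists_finset_sum_eq
    (Sum.map_injective.2 ⟨fun _ _ h => by simpa using h, spider2LegEdge_injective⟩ :
      Function.Injective (Sum.map (fun i => some (i, true)) (spider2LegEdge n)))
  rw [card_add_card_edgeFinset_spider2] at hs
  have hup := two_mul_sum_add_le hs
  simp [Fintype.sum_sum_type, spider2LegEdge, ← sum_add_distrib] at hcard hsum
  rw [hcard, hsum, show 4 * n + 1 - (n + n) = 2 * n + 1 by omega] at hup
  simp only [latWeight_spider2_leaf]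
  linarith

theorem le_nine_of_card_image_latWeight_spider2_le_two
    (hL : IsLocalAntimagicTotal (spider2 n) fv fe)
    (h2 : #(univ.image (latWeight (spider2 n) fv fe)) ≤ 2) : n ≤ 9 := by
  have hlow := hL.1.two_mul_latWeight_spider2_hub_ge
  have hup := hL.1.two_mul_sum_latWeight_spider2_leaf_add_le
  set w := latWeight (spider2 n) fv fe
  have hleaf : ∀ i, w (some (i, true)) = w none := fun i =>
    apply_eq_of_card_image_le_two h2 (hL.2 (spider2_adj_mid_leaf i)).symm
      (hL.2 (spider2_adj_hub_mid i)).symm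
  simp only [hleaf, sum_const, card_univ, Fintype.card_fin, smul_eq_mul] at hup
  have hcubic : n * ((n + 1) * (n + 2)) ≤ n * (2 * w none) := Nat.mul_le_mul_left n hlow
  by_contra! hn
  nlinarith [Nat.mul_le_mul_right (n * n) hn, Nat.mul_le_mul_right n hn]

end Spider

section Construction

variable {n : ℕ}

/-- Leg edges get the labels `1, …, n`, leaves `n + 1, …, 2n`, middle vertices `2n + 1, …, 3n`,
the hub `3n + 1` and hub edges `3n + 2, …, 4n + 1`; only the hub's weight is quadratic in `n`. -/
def spider2VertexLabel (n : ℕ) : Option (Fin n × Bool) → ℕ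
  | none => 3 * n + 1
  | some (i, false) => 2 * n + 1 + i
  | some (i, true) => n + 1 + i

/-- An edge is labelled by the sum of the potentials of its ends, which is well defined on `Sym2`
and gives the hub edge `s(none, some (i, false))` the label `3n + 2 + i` and the leg edge
`s(some (i, false), some (i, true))` the label `i + 1`. -/
def spider2EdgePotential (n : ℕ) : Option (Fin n × Bool) → ℕ
  | none => 3 * n + 1
  | some (i, false) => i + 1
  | some (_, true) => 0

def spider2EdgeLabel (n : ℕ) : Sym2 (Option (Fin n × Bool)) → ℕ :=
  Sym2.lift ⟨fun a b => spider2EdgePotential n a + spider2EdgePotential n b,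
    fun _ _ => add_comm _ _⟩

theorem isTotalLabeling_spider2Label :
    IsTotalLabeling (spider2 n) (spider2VertexLabel n) (spider2EdgeLabel n) := by
  apply isTotalLabeling_of_surjOn <;> rw [card_add_card_edgeFinset_spider2]
  · rintro ((_ | ⟨⟨i, hi⟩, _ | _⟩) | ⟨e, he⟩)
    all_goals try (simp [spider2VertexLabel]; omega)
    obtain ⟨⟨i, hi⟩, rfl | rfl⟩ := spider2_edge_cases he <;>
      simp [spider2EdgeLabel, spider2EdgePotential] <;> omega
  · intro m ⟨hm1, hm⟩
    simp only [Set.image_univ, Set.mem_range]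
    by_cases h1 : m ≤ n
    · exact ⟨.inr (spider2LegEdge n ⟨m - 1, by omega⟩),
        by simp [spider2LegEdge, spider2EdgeLabel, spider2EdgePotential]; omega⟩
    by_cases h2 : m ≤ 2 * n
    · exact ⟨.inl (some (⟨m - n - 1, by omega⟩, true)), by simp [spider2VertexLabel]; omega⟩
    by_cases h3 : m ≤ 3 * n
    · exact ⟨.inl (some (⟨m - 2 * n - 1, by omega⟩, false)), by simp [spider2VertexLabel]; omega⟩
    by_cases h4 : m = 3 * n + 1
    · exact ⟨.inl none, by simp [spider2VertexLabel, h4]⟩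
    · exact ⟨.inr (spider2HubEdge n ⟨m - 3 * n - 2, by omega⟩),
        by simp [spider2HubEdge, spider2EdgeLabel, spider2EdgePotential]; omega⟩

theorem latWeight_spider2Label_hub_ge :
    3 * n + 1 + n * (3 * n + 2) ≤
      latWeight (spider2 n) (spider2VertexLabel n) (spider2EdgeLabel n) none := by
  rw [latWeight_spider2_hub]
  simp only [spider2VertexLabel, spider2EdgeLabel, spider2EdgePotential, Sym2.lift_mk]
  simpa using sum_le_sum (s := univ) fun (i : Fin n) _ =>
    (by omega : 3 * n + 2 ≤ 3 * n + 1 + (i + 1))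

theorem latWeight_spider2Label_mid (i : Fin n) :
    latWeight (spider2 n) (spider2VertexLabel n) (spider2EdgeLabel n) (some (i, false)) =
      5 * n + 4 + 3 * i := by
  simp only [latWeight_spider2_mid, spider2VertexLabel, spider2EdgeLabel, spider2EdgePotential,
    Sym2.lift_mk]
  omega

theorem latWeight_spider2Label_leaf (i : Fin n) :
    latWeight (spider2 n) (spider2VertexLabel n) (spider2EdgeLabel n) (some (i, true)) =
      n + 2 + 2 * i := by
  simp only [latWeight_spider2_leaf, spider2VertexLabel, spider2EdgeLabel, spider2EdgePotential,
    Sym2.lift_mk]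
  omega

theorem isLocalAntimagicTotal_spider2Label (hn : 2 ≤ n) :
    IsLocalAntimagicTotal (spider2 n) (spider2VertexLabel n) (spider2EdgeLabel n) := by
  refine ⟨isTotalLabeling_spider2Label, ?_⟩
  have hhub := latWeight_spider2Label_hub_ge (n := n)
  have := Nat.mul_le_mul_right (3 * n + 2) hn
  rintro (_ | ⟨⟨i, hi⟩, _ | _⟩) (_ | ⟨⟨j, hj⟩, _ | _⟩) hadj <;> simp [spider2R] at hadj
  all_goals
    try subst hadj
    simp only [latWeight_spider2Label_mid, latWeight_spider2Label_leaf]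
    omega

end Construction

/-- For every `n ≥ 10`, the spider `Sp(2^[n])` admits no local antimagic total labeling whose
induced vertex weights take exactly `2` distinct values; that is, `χ_lat(Sp(2^[n])) ≥ 3`. -/
theorem spider2_no_two_weights (n : ℕ) (hn : 10 ≤ n) :
    (∀ fv fe, IsLocalAntimagicTotal (spider2 n) fv fe →
      (Finset.univ.image (latWeight (spider2 n) fv fe)).card ≠ 2) ∧
    3 ≤ chiLat (spider2 n) := by
  have hne_two : ∀ fv fe, IsLocalAntimagicTotal (spider2 n) fv fe →
      #(univ.image (latWeight (spider2 n) fv fe)) ≠ 2 := fun _ _ hL h2 => by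
    have := le_nine_of_card_image_latWeight_spider2_le_two hL h2.le
    omega
  refine ⟨hne_two, le_chiLat ⟨_, _, isLocalAntimagicTotal_spider2Label (by omega)⟩
    fun fv fe hL => ?_⟩
  have := hL.two_le_card_image_latWeight (spider2_adj_hub_mid ⟨0, by omega⟩)
  have := hne_two fv fe hL
  omega
end

section
/- For every even integer n = 2k ≥ 10, the spider Sp(2^[n]) admits a local antimagic total labeling f : V ∪ E → {1,...,8k+1} with exactly 3 distinct vertex weights, namely w(x) = 2k² + 4k + 1, w(u_i) = 9k + 3 for all i, and w(v_i) = 12k + 3 for all i; in particular χ_lat(Sp(2^[n])) ≤ 3 for even n ≥ 10. -/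
/-!
The labeling uses the labels in five consecutive blocks. The spoke edges `x u_i` get
`1, …, 2k` (odd labels, decreasing, on the first `k` legs, even labels on the last `k`), the
middle vertices get `2k+1, …, 4k+1` except `3k+1`, which goes to the centre, the leg edges
`u_i v_i` get `4k+2+i` and the leaves `8k+1-i`. On each leg the labels of `u_i` and of the
spoke compensate the growth of the leg edge, so `w(u_i) = 9k+3`, and leg edge plus leaf gives
`w(v_i) = 12k+3`. The centre weight `3k+1 + (1 + ⋯ + 2k) = 2k² + 4k + 1` is never a multiple
of `3`, unlike the other two weights, so all three weights are distinct.
-/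

open Finset

variable {V : Type*} [Fintype V] [DecidableEq V]

section TotalLabeling

variable {W : Type*} [Fintype W] (G : SimpleGraph W) [DecidableRel G.Adj]
  {fv : W → ℕ} {fe : Sym2 W → ℕ}

theorem isTotalLabeling_of_injective_of_mapsTo
    (hinj : Function.Injective (Sum.elim fv fun e : G.edgeSet => fe e))
    (hmaps : ∀ z, Sum.elim fv (fun e : G.edgeSet => fe e) z ∈
      Set.Icc 1 (Fintype.card W + #G.edgeFinset)) :
    IsTotalLabeling G fv fe := by
  refine ⟨fun z _ => hmaps z, hinj.injOn, ?_⟩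
  rw [Set.SurjOn, Set.image_univ]
  refine (Set.eq_of_subset_of_ncard_le (Set.range_subset_iff.2 hmaps) ?_
    (Set.finite_Icc _ _)).symm.subset
  rw [← Set.image_univ, Set.ncard_image_of_injective _ hinj, Set.ncard_univ, Nat.card_sum,
    Nat.card_eq_fintype_card, Nat.card_eq_fintype_card, ← SimpleGraph.edgeFinset_card,
    ← Finset.coe_Icc, Set.ncard_coe_finset, Nat.card_Icc, Nat.add_sub_cancel]

theorem chiLat_le_card_image_latWeight (h : IsLocalAntimagicTotal G fv fe) :
    chiLat G ≤ #(univ.image (latWeight G fv fe)) :=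
  Nat.sInf_le ⟨fv, fe, h, rfl⟩

end TotalLabeling

theorem not_three_dvd_two_mul_sq_add_four_mul_add_one (k : ℕ) :
    ¬ 3 ∣ 2 * k ^ 2 + 4 * k + 1 := by
  rw [← ZMod.natCast_eq_zero_iff]
  push_cast
  generalize (k : ZMod 3) = x
  revert x
  decide

namespace spider2

variable {n : ℕ}

theorem adj_iff (a b : Option (Fin n × Bool)) :
    (spider2 n).Adj a b ↔ ∃ i : Fin n,
      (a = none ∧ b = some (i, false)) ∨ (a = some (i, false) ∧ b = none) ∨
      (a = some (i, false) ∧ b = some (i, true)) ∨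
      (a = some (i, true) ∧ b = some (i, false)) := by
  rw [SimpleGraph.fromRel_adj]
  rcases a with _ | ⟨i, _ | _⟩ <;> rcases b with _ | ⟨j, _ | _⟩ <;>
    simp [spider2R, eq_comm]

theorem neighborFinset_none :
    (spider2 n).neighborFinset none = univ.image (fun i => some (i, false)) := by
  ext a
  simp only [SimpleGraph.mem_neighborFinset, adj_iff, mem_image, mem_univ, true_and]
  aesop

theorem neighborFinset_middle (i : Fin n) :
    (spider2 n).neighborFinset (some (i, false)) = {none, some (i, true)} := by
  ext a
  simp only [SimpleGraph.mem_neighborFinset, adj_iff, mem_insert, mem_singleton]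
  aesop

theorem neighborFinset_leaf (i : Fin n) :
    (spider2 n).neighborFinset (some (i, true)) = {some (i, false)} := by
  ext a
  simp only [SimpleGraph.mem_neighborFinset, adj_iff, mem_singleton]
  aesop

theorem card_vertices : Fintype.card (Option (Fin n × Bool)) = 2 * n + 1 := by
  simp [mul_comm]

theorem card_edgeFinset : #(spider2 n).edgeFinset = 2 * n := by
  have h := (spider2 n).sum_degrees_eq_twice_card_edges
  simp only [Fintype.sum_option, Fintype.sum_prod_type, Fintype.sum_bool,
    ← SimpleGraph.card_neighborFinset_eq_degree, neighborFinset_none, neighborFinset_middle,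
    neighborFinset_leaf] at h
  rw [card_image_of_injective _ fun i j hij => by simpa using hij] at h
  simp only [card_univ, Fintype.card_fin, card_singleton, mem_singleton, reduceCtorEq,
    not_false_eq_true, card_insert_of_notMem, sum_const, smul_eq_mul] at h
  omega

theorem exists_of_mem_edgeSet {e : Sym2 (Option (Fin n × Bool))}
    (he : e ∈ (spider2 n).edgeSet) :
    ∃ i : Fin n, e = s(none, some (i, false)) ∨ e = s(some (i, false), some (i, true)) := by
  induction e with
  | _ a b =>
    obtain ⟨i, h⟩ := (adj_iff a b).1 he
    rcases h with ⟨rfl, rfl⟩ | ⟨rfl, rfl⟩ | ⟨rfl, rfl⟩ | ⟨rfl, rfl⟩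
    exacts [⟨i, .inl rfl⟩, ⟨i, .inl Sym2.eq_swap⟩, ⟨i, .inr rfl⟩, ⟨i, .inr Sym2.eq_swap⟩]

variable (k : ℕ)

def spokeLabel (i : Fin (2 * k)) : ℕ :=
  if (i : ℕ) < k then 2 * k - 1 - 2 * i else 4 * k - 2 * i

def vertexLabel : Option (Fin (2 * k) × Bool) → ℕ
  | none => 3 * k + 1
  | some (i, false) => if (i : ℕ) < k then 3 * k + 2 + i else k + 1 + i
  | some (i, true) => 8 * k + 1 - i

-- Only the values on adjacent pairs matter.
def edgeLabelOfEndpoints :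
    Option (Fin (2 * k) × Bool) → Option (Fin (2 * k) × Bool) → ℕ
  | none, some (i, false) | some (i, false), none => spokeLabel k i
  | some (i, false), some (_, true) | some (_, true), some (i, false) => 4 * k + 2 + i
  | _, _ => 0

def edgeLabel : Sym2 (Option (Fin (2 * k) × Bool)) → ℕ :=
  Sym2.lift ⟨edgeLabelOfEndpoints k, by rintro (_ | ⟨i, _ | _⟩) (_ | ⟨j, _ | _⟩) <;> rfl⟩

variable {k}

theorem edgeLabel_spoke (i : Fin (2 * k)) :
    edgeLabel k s(none, some (i, false)) = spokeLabel k i := rfl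

theorem edgeLabel_leg (i : Fin (2 * k)) :
    edgeLabel k s(some (i, false), some (i, true)) = 4 * k + 2 + i := rfl

theorem spokeLabel_injective : Function.Injective (spokeLabel k) := by
  intro i j h
  have := i.isLt
  have := j.isLt
  unfold spokeLabel at h
  split_ifs at h <;> ext <;> omega

theorem spokeLabel_mem_Icc (i : Fin (2 * k)) : spokeLabel k i ∈ Icc 1 (2 * k) := by
  have := i.isLt
  unfold spokeLabel
  split_ifs <;> simp only [mem_Icc] <;> omega

theorem image_spokeLabel : univ.image (spokeLabel k) = Icc 1 (2 * k) := by
  refine eq_of_subset_of_card_le (fun _ h => ?_) ?_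
  · obtain ⟨i, -, rfl⟩ := mem_image.1 h
    exact spokeLabel_mem_Icc i
  · simp [card_image_of_injective _ spokeLabel_injective]

theorem sum_spokeLabel : ∑ i, spokeLabel k i = k * (2 * k + 1) := by
  rw [show ∑ i, spokeLabel k i = ∑ j ∈ Icc 1 (2 * k), j by
    rw [← image_spokeLabel, sum_image spokeLabel_injective.injOn]]
  have gauss := sum_range_id_mul_two (2 * k + 1)
  rw [range_eq_Ico, sum_eq_sum_Ico_succ_bot (by omega), Nat.add_sub_cancel] at gauss
  change ∑ j ∈ Ico 1 (2 * k + 1), j = _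
  linarith

theorem latWeight_none :
    latWeight (spider2 (2 * k)) (vertexLabel k) (edgeLabel k) none = 2 * k ^ 2 + 4 * k + 1 := by
  rw [latWeight, neighborFinset_none, sum_image fun i _ j _ hij => by simpa using hij]
  simp only [edgeLabel_spoke, sum_spokeLabel, vertexLabel]
  ring

theorem latWeight_middle (i : Fin (2 * k)) :
    latWeight (spider2 (2 * k)) (vertexLabel k) (edgeLabel k) (some (i, false)) =
      9 * k + 3 := by
  rw [latWeight, neighborFinset_middle, sum_pair (by simp), Sym2.eq_swap, edgeLabel_spoke,
    edgeLabel_leg]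
  have := i.isLt
  simp only [vertexLabel, spokeLabel]
  split_ifs <;> omega

theorem latWeight_leaf (i : Fin (2 * k)) :
    latWeight (spider2 (2 * k)) (vertexLabel k) (edgeLabel k) (some (i, true)) =
      12 * k + 3 := by
  rw [latWeight, neighborFinset_leaf, sum_singleton, Sym2.eq_swap, edgeLabel_leg]
  have := i.isLt
  simp only [vertexLabel]
  omega

theorem vertexLabel_injective : Function.Injective (vertexLabel k) := by
  rintro (_ | ⟨i, _ | _⟩) (_ | ⟨j, _ | _⟩) h <;> simp only [vertexLabel] at h <;>
    (try have := i.isLt) <;> (try have := j.isLt) <;> (try split_ifs at h) <;>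
    first | rfl | omega | (obtain rfl : i = j := Fin.ext (by omega); rfl)

theorem edgeLabel_injOn : Set.InjOn (edgeLabel k) (spider2 (2 * k)).edgeSet := by
  intro e he e' he' h
  obtain ⟨i, rfl | rfl⟩ := exists_of_mem_edgeSet he <;>
    obtain ⟨j, rfl | rfl⟩ := exists_of_mem_edgeSet he' <;>
    simp only [edgeLabel_spoke, edgeLabel_leg] at h <;>
    have := spokeLabel_mem_Icc i <;> have := spokeLabel_mem_Icc j <;>
    simp only [mem_Icc] at *
  · rw [spokeLabel_injective h]
  · omega
  · omega
  · rw [show i = j by ext; omega]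

theorem vertexLabel_ne_edgeLabel (v : Option (Fin (2 * k) × Bool))
    {e : Sym2 (Option (Fin (2 * k) × Bool))} (he : e ∈ (spider2 (2 * k)).edgeSet) :
    vertexLabel k v ≠ edgeLabel k e := by
  obtain ⟨j, rfl | rfl⟩ := exists_of_mem_edgeSet he <;>
    simp only [edgeLabel_spoke, edgeLabel_leg] <;>
    have := spokeLabel_mem_Icc j <;> have := j.isLt <;> simp only [mem_Icc] at * <;>
    rcases v with _ | ⟨i, _ | _⟩ <;> simp only [vertexLabel] <;>
    (try have := i.isLt) <;> (try split_ifs) <;> omega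

theorem vertexLabel_mem_Icc (v : Option (Fin (2 * k) × Bool)) :
    vertexLabel k v ∈ Set.Icc 1 (8 * k + 1) := by
  rcases v with _ | ⟨i, _ | _⟩ <;> simp only [vertexLabel, Set.mem_Icc] <;>
    (try have := i.isLt) <;> (try split_ifs) <;> omega

theorem edgeLabel_mem_Icc {e : Sym2 (Option (Fin (2 * k) × Bool))}
    (he : e ∈ (spider2 (2 * k)).edgeSet) : edgeLabel k e ∈ Set.Icc 1 (8 * k + 1) := by
  obtain ⟨i, rfl | rfl⟩ := exists_of_mem_edgeSet he <;>
    simp only [edgeLabel_spoke, edgeLabel_leg, Set.mem_Icc] <;>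
    have := spokeLabel_mem_Icc i <;> have := i.isLt <;> simp only [mem_Icc] at * <;> omega

theorem isTotalLabeling : IsTotalLabeling (spider2 (2 * k)) (vertexLabel k) (edgeLabel k) := by
  refine isTotalLabeling_of_injective_of_mapsTo _
    (vertexLabel_injective.sumElim edgeLabel_injOn.injective
      fun v e => vertexLabel_ne_edgeLabel v e.2) ?_
  rw [card_vertices, card_edgeFinset,
    show 2 * (2 * k) + 1 + 2 * (2 * k) = 8 * k + 1 by ring]
  rintro (v | ⟨e, he⟩)
  exacts [vertexLabel_mem_Icc v, edgeLabel_mem_Icc he]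

theorem isLocalAntimagicTotal :
    IsLocalAntimagicTotal (spider2 (2 * k)) (vertexLabel k) (edgeLabel k) := by
  refine ⟨isTotalLabeling, fun u v huv => ?_⟩
  obtain ⟨i, h⟩ := (adj_iff u v).1 huv
  have := i.isLt
  have h3 := not_three_dvd_two_mul_sq_add_four_mul_add_one k
  rcases h with ⟨rfl, rfl⟩ | ⟨rfl, rfl⟩ | ⟨rfl, rfl⟩ | ⟨rfl, rfl⟩ <;>
    simp only [latWeight_none, latWeight_middle, latWeight_leaf] <;> omega

theorem image_latWeight (hk : 0 < k) :
    univ.image (latWeight (spider2 (2 * k)) (vertexLabel k) (edgeLabel k)) =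
      {2 * k ^ 2 + 4 * k + 1, 9 * k + 3, 12 * k + 3} := by
  ext m
  simp only [mem_image, mem_univ, true_and, mem_insert, mem_singleton]
  constructor
  · rintro ⟨_ | ⟨i, _ | _⟩, rfl⟩
    exacts [.inl latWeight_none, .inr (.inl (latWeight_middle i)),
      .inr (.inr (latWeight_leaf i))]
  · rintro (rfl | rfl | rfl)
    exacts [⟨none, latWeight_none⟩, ⟨some (⟨0, by omega⟩, false), latWeight_middle _⟩,
      ⟨some (⟨0, by omega⟩, true), latWeight_leaf _⟩]

theorem card_image_latWeight (hk : 0 < k) :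
    #(univ.image (latWeight (spider2 (2 * k)) (vertexLabel k) (edgeLabel k))) = 3 := by
  have h3 := not_three_dvd_two_mul_sq_add_four_mul_add_one k
  rw [image_latWeight hk,
    card_insert_of_notMem (by simp only [mem_insert, mem_singleton]; omega), card_pair (by omega)]

end spider2

/-- For every even `n = 2k ≥ 10`, the spider `Sp(2^[n])` admits a local antimagic total
labeling (into `{1, …, 8k+1}`) with exactly `3` distinct vertex weights, namely
`w(x) = 2k² + 4k + 1`, `w(u_i) = 9k + 3` and `w(v_i) = 12k + 3`; in particular
`χ_lat(Sp(2^[n])) ≤ 3` for even `n ≥ 10`. -/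
theorem spider2_even_three_weights (k : ℕ) (hk : 5 ≤ k) :
    (∃ fv fe, IsLocalAntimagicTotal (spider2 (2 * k)) fv fe ∧
      (Finset.univ.image (latWeight (spider2 (2 * k)) fv fe)).card = 3 ∧
      latWeight (spider2 (2 * k)) fv fe none = 2 * k ^ 2 + 4 * k + 1 ∧
      (∀ i : Fin (2 * k),
        latWeight (spider2 (2 * k)) fv fe (some (i, false)) = 9 * k + 3) ∧
      (∀ i : Fin (2 * k),
        latWeight (spider2 (2 * k)) fv fe (some (i, true)) = 12 * k + 3)) ∧
    chiLat (spider2 (2 * k)) ≤ 3 := by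
  open spider2 in
  have hcard := card_image_latWeight (k := k) (by omega)
  refine ⟨⟨vertexLabel k, edgeLabel k, isLocalAntimagicTotal, hcard, latWeight_none,
    latWeight_middle, latWeight_leaf⟩, ?_⟩
  exact hcard ▸ chiLat_le_card_image_latWeight _ isLocalAntimagicTotal
end
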